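/- Fix a ∈ (-1,1) and set c = (a-1)/2. Define u : [-1,1] → ℝ by u(x) = c(x+1) for -1 ≤ x < a and u(x) = c(a+1) + (1+c)(x-a) for a ≤ x ≤ 1, and set a_k = (1/2)(P_{k-1}(a) - P_{k+1}(a)) for k ≥ 1. Then the Legendre coefficients of u satisfy c_0(u) = -a_1/3 and c_k(u) = a_{k-1}/(2k-1) - a_{k+1}/(2k+3) for every integer k ≥ 1 (with the convention a_0 = 0). -/

import Mathlib

open MeasureTheory Real Polynomial Finset

/-- The `n`-th Legendre polynomial (via Rodrigues' formula), normalized so that `P n 1 = 1`. -/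
noncomputable def legendre (n : ℕ) : Polynomial ℝ :=
  ((2 ^ n * n.factorial : ℝ)⁻¹) • derivative^[n] ((X ^ 2 - 1) ^ n)

/-- The `k`-th Legendre coefficient of `f : [-1,1] → ℝ`:  `c_k(f) = (k + 1/2) ∫_{-1}^1 f t P_k t dt`. -/
noncomputable def legendreCoeff (f : ℝ → ℝ) (k : ℕ) : ℝ :=
  ((k : ℝ) + 1 / 2) * ∫ t in (-1 : ℝ)..1, f t * (legendre k).eval t

/-- The `p`-th partial Legendre sum of `f`:  `S_p(f)(x) = ∑_{k=0}^p c_k(f) P_k(x)`. -/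
noncomputable def legendreSum (f : ℝ → ℝ) (p : ℕ) (x : ℝ) : ℝ :=
  ∑ k ∈ Finset.range (p + 1), legendreCoeff f k * (legendre k).eval x

/-!
On `[-1, 1]`, `u(x) = c (x + 1) + (x - a)₊`. The polynomial `Qₙ = Dⁿ (x² - 1)ⁿ⁺¹ / (2ⁿ⁺¹ (n+1)!)`
is a primitive of `Pₙ₊₁` vanishing at `±1` (where `(x² - 1)ⁿ⁺¹` has roots of order `n + 1`), and
differentiating `(x² - 1)ⁿ⁺²` twice gives `Pₙ₊₂ - Pₙ = (2n + 3) Qₙ`; in particular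
`aₙ₊₁ = -(2n + 3) Qₙ(a) / 2`. Integrating a ramp `(x - b)₊` against `Pₙ₊₂` by parts gives
`-∫_b^1 Qₙ₊₁ = (Qₙ₊₂(b) - Qₙ(b)) / (2n + 5)`, which vanishes at `b = -1`. The cases `k = 0, 1`,
where `P₀` (which has no such primitive) enters, are computed directly.
-/

section
variable {R : Type*} [CommRing R]

theorem derivative_X_sq_sub_one_pow (n : ℕ) :
    derivative (((X : R[X]) ^ 2 - 1) ^ (n + 1)) = 2 * ((n : R[X]) + 1) * X * (X ^ 2 - 1) ^ n := by
  rw [derivative_pow, derivative_sub, derivative_X_pow, derivative_one, Nat.add_sub_cancel,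
    C_eq_natCast, C_eq_natCast]
  push_cast
  ring

theorem iterate_derivative_two_X_sq_sub_one_pow (n : ℕ) :
    derivative^[2] (((X : R[X]) ^ 2 - 1) ^ (n + 2)) =
      (2 * (n + 2) * (2 * n + 3)) • (X ^ 2 - 1) ^ (n + 1) +
        (4 * (n + 1) * (n + 2)) • (X ^ 2 - 1) ^ n := by
  rw [Function.iterate_succ_apply, Function.iterate_one, derivative_X_sq_sub_one_pow,
    derivative_mul, derivative_X_sq_sub_one_pow, derivative_mul, derivative_X]
  simp only [derivative_mul, derivative_ofNat, derivative_add, derivative_natCast, derivative_one]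
  push_cast
  ring

theorem eval_iterate_derivative_X_sq_sub_one_pow {x : R} (hx : x ^ 2 = 1) (n : ℕ) :
    (derivative^[n] (((X : R[X]) ^ 2 - 1) ^ (n + 1))).eval x = 0 := by
  obtain ⟨q, hq⟩ := pow_sub_dvd_iterate_derivative_pow ((X : R[X]) ^ 2 - 1) (n + 1) n
  simp [hq, hx]
end

noncomputable def legendrePrimitive (n : ℕ) : ℝ[X] :=
  ((2 ^ (n + 1) * (n + 1).factorial : ℝ)⁻¹) • derivative^[n] ((X ^ 2 - 1) ^ (n + 1))

theorem legendre_add_two (n : ℕ) :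
    legendre (n + 2) = legendre n + (2 * (n : ℝ) + 3) • legendrePrimitive n := by
  rw [legendre, Function.iterate_add_apply, iterate_derivative_two_X_sq_sub_one_pow,
    iterate_map_add, iterate_derivative_smul, iterate_derivative_smul, legendre, legendrePrimitive,
    ← Nat.cast_smul_eq_nsmul ℝ, ← Nat.cast_smul_eq_nsmul ℝ]
  have h : (n.factorial : ℝ) ≠ 0 := by positivity
  match_scalars <;>
  · push_cast [Nat.factorial_succ]
    field_simp
    ring

theorem legendre_eval_sub_legendre_add_two_eval (n : ℕ) (x : ℝ) :
    (legendre n).eval x - (legendre (n + 2)).eval x =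
      -(2 * n + 3) * (legendrePrimitive n).eval x := by
  rw [legendre_add_two, eval_add, eval_smul, smul_eq_mul]
  ring

theorem derivative_legendrePrimitive (n : ℕ) :
    derivative (legendrePrimitive n) = legendre (n + 1) := by
  rw [legendrePrimitive, legendre, derivative_smul, ← Function.iterate_succ_apply' derivative]

theorem legendrePrimitive_eval_eq_zero (n : ℕ) {x : ℝ} (hx : x ^ 2 = 1) :
    (legendrePrimitive n).eval x = 0 := by
  simp [legendrePrimitive, eval_iterate_derivative_X_sq_sub_one_pow hx]

theorem legendre_zero : legendre 0 = 1 := by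
  simp [legendre]

theorem legendrePrimitive_zero_eval (x : ℝ) :
    (legendrePrimitive 0).eval x = (x ^ 2 - 1) / 2 := by
  simp [legendrePrimitive, div_eq_inv_mul]

theorem integral_eval_derivative (p : ℝ[X]) (x y : ℝ) :
    ∫ t in x..y, (derivative p).eval t = p.eval y - p.eval x :=
  intervalIntegral.integral_eq_sub_of_hasDerivAt (fun t _ => p.hasDerivAt t)
    ((derivative p).continuous.intervalIntegrable _ _)

theorem integral_sub_mul_eval_derivative (p : ℝ[X]) (b c : ℝ) :
    ∫ t in b..c, (t - b) * (derivative p).eval t = (c - b) * p.eval c - ∫ t in b..c, p.eval t := by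
  rw [intervalIntegral.integral_mul_deriv_eq_deriv_mul (u := fun t => t - b) (u' := fun _ => 1)
    (fun t _ => (hasDerivAt_id' t).sub_const b) (fun t _ => p.hasDerivAt t)
    intervalIntegrable_const ((derivative p).continuous.intervalIntegrable _ _)]
  simp

theorem integral_legendre_zero (x : ℝ) : ∫ t in x..1, (legendre 0).eval t = 1 - x := by
  simp [legendre_zero]

theorem integral_legendre_succ (n : ℕ) (x : ℝ) :
    ∫ t in x..1, (legendre (n + 1)).eval t = -(legendrePrimitive n).eval x := by
  rw [← derivative_legendrePrimitive, integral_eval_derivative,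
    legendrePrimitive_eval_eq_zero _ (one_pow 2), zero_sub]

theorem integral_sub_mul_legendre_succ (n : ℕ) (b : ℝ) :
    ∫ t in b..1, (t - b) * (legendre (n + 1)).eval t =
      ((legendrePrimitive (n + 1)).eval b + ∫ t in b..1, (legendre n).eval t) / (2 * n + 3) := by
  have h : (2 * (n : ℝ) + 3) ≠ 0 := by positivity
  have hQ : ∀ t, (legendrePrimitive n).eval t =
      ((legendre (n + 2)).eval t - (legendre n).eval t) / (2 * n + 3) := fun t => by
    rw [eq_div_iff h, ← neg_sub, legendre_eval_sub_legendre_add_two_eval]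
    ring
  rw [← derivative_legendrePrimitive, integral_sub_mul_eval_derivative,
    legendrePrimitive_eval_eq_zero _ (one_pow 2), mul_zero, zero_sub]
  simp_rw [hQ]
  rw [intervalIntegral.integral_div, intervalIntegral.integral_sub
    ((legendre _).continuous.intervalIntegrable _ _)
    ((legendre _).continuous.intervalIntegrable _ _), integral_legendre_succ]
  ring

theorem integral_sub_mul_legendre_zero (b : ℝ) :
    ∫ t in b..1, (t - b) * (legendre 0).eval t = (1 - b) ^ 2 / 2 := by
  simp [legendre_zero, intervalIntegral.integral_comp_sub_right (fun t => t)]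

theorem integral_mul_eq_of_eqOn_ramp {u g : ℝ → ℝ} {a c : ℝ} (ha : a ∈ Set.Icc (-1 : ℝ) 1)
    (hg : Continuous g) (hu : Set.EqOn u (fun t => c * (t + 1) + max (t - a) 0) (Set.Icc (-1) 1)) :
    ∫ t in (-1)..1, u t * g t =
      c * (∫ t in (-1)..1, (t - -1) * g t) + ∫ t in a..1, (t - a) * g t := by
  have hramp : Continuous fun t => max (t - a) 0 * g t := by fun_prop
  have hleft : ∫ t in (-1)..a, max (t - a) 0 * g t = 0 := by
    refine (intervalIntegral.integral_congr fun t ht => ?_).trans intervalIntegral.integral_zero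
    rw [Set.uIcc_of_le ha.1] at ht
    simp [ht.2]
  have hright : ∫ t in a..1, max (t - a) 0 * g t = ∫ t in a..1, (t - a) * g t := by
    refine intervalIntegral.integral_congr fun t ht => ?_
    rw [Set.uIcc_of_le ha.2] at ht
    simp [ht.1]
  calc ∫ t in (-1)..1, u t * g t
      = ∫ t in (-1)..1, (c * (t - -1) * g t + max (t - a) 0 * g t) := by
        refine intervalIntegral.integral_congr fun t ht => ?_
        rw [Set.uIcc_of_le (by norm_num)] at ht
        rw [hu ht]
        ring
    _ = _ := by
        rw [intervalIntegral.integral_add (Continuous.intervalIntegrable (by fun_prop) _ _)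
            (hramp.intervalIntegrable _ _),
          ← intervalIntegral.integral_add_adjacent_intervals (hramp.intervalIntegrable _ a)
            (hramp.intervalIntegrable _ _), hleft, hright, zero_add]
        simp_rw [mul_assoc, intervalIntegral.integral_const_mul]

/-- the Legendre coefficients of the piecewise linear solution `u`. -/
theorem stmt_9 (a : ℝ) (ha : a ∈ Set.Ioo (-1 : ℝ) 1) (c : ℝ) (hc : c = (a - 1) / 2)
    (u : ℝ → ℝ)
    (hu₁ : ∀ x : ℝ, -1 ≤ x → x < a → u x = c * (x + 1))
    (hu₂ : ∀ x : ℝ, a ≤ x → x ≤ 1 → u x = c * (a + 1) + (1 + c) * (x - a))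
    (A : ℕ → ℝ) (hA₀ : A 0 = 0)
    (hA : ∀ k : ℕ, 1 ≤ k → A k = (1 / 2) * ((legendre (k - 1)).eval a - (legendre (k + 1)).eval a)) :
    legendreCoeff u 0 = -(A 1) / 3 ∧
      ∀ k : ℕ, 1 ≤ k →
        legendreCoeff u k = A (k - 1) / (2 * (k : ℝ) - 1) - A (k + 1) / (2 * (k : ℝ) + 3) := by
  have hu : Set.EqOn u (fun t => c * (t + 1) + max (t - a) 0) (Set.Icc (-1) 1) := by
    rintro t ⟨ht₁, ht₂⟩
    rcases lt_or_ge t a with h | h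
    · simp [hu₁ t ht₁ h, (sub_neg.2 h).le]
    · simp only [hu₂ t h ht₂, max_eq_left (sub_nonneg.2 h)]
      ring
  have hcoeff (k : ℕ) : legendreCoeff u k = (k + 1 / 2) * (c * (∫ t in (-1)..1, (t - -1) *
      (legendre k).eval t) + ∫ t in a..1, (t - a) * (legendre k).eval t) := by
    rw [legendreCoeff,
      integral_mul_eq_of_eqOn_ramp (Set.Ioo_subset_Icc_self ha) (legendre k).continuous hu]
  have hA' (n : ℕ) : A (n + 1) = -(2 * n + 3) / 2 * (legendrePrimitive n).eval a := by
    rw [hA (n + 1) n.succ_pos, Nat.add_sub_cancel, legendre_eval_sub_legendre_add_two_eval]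
    ring
  have hQ (n : ℕ) : (legendrePrimitive n).eval (-1) = 0 :=
    legendrePrimitive_eval_eq_zero n (by norm_num)
  refine ⟨?_, fun k hk => ?_⟩
  · rw [hcoeff, integral_sub_mul_legendre_zero, integral_sub_mul_legendre_zero, hA',
      legendrePrimitive_zero_eval, hc]
    ring
  obtain ⟨n, rfl⟩ := Nat.exists_eq_add_of_le' hk
  rcases n with _ | n
  · rw [hcoeff, integral_sub_mul_legendre_succ, integral_sub_mul_legendre_succ,
      integral_legendre_zero, integral_legendre_zero, hQ, hA', hA₀, hc]
    push_cast
    ring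
  · rw [hcoeff, integral_sub_mul_legendre_succ, integral_sub_mul_legendre_succ,
      integral_legendre_succ, integral_legendre_succ, hQ, hQ, Nat.add_sub_cancel, hA', hA']
    push_cast
    rw [show 2 * ((n : ℝ) + 1 + 1) - 1 = 2 * n + 3 by ring]
    field_simp
    ring
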